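/- Let γ ∈ (0,1), x a nonnegative integer, and let p : {0,…,x} → ℝ≥0 be a probability mass function symmetric about x/2 (i.e., p(y) = p(x−y) for all y). Define θ(x,p) := Σ_{y=0}^x p(y) (1/2)^y (1−γ)^{y−1}. If p₁ centrally dominates p₂ (there exists z ∈ [0, x/2] such that p₁(y) ≥ p₂(y) for all integer y with |y − x/2| ≤ z, and p₁(y) ≤ p₂(y) for all integer y with |y − x/2| > z), then θ(x,p₁) ≤ θ(x,p₂). -/

import Mathlib

/-!
Writing `r = (1 - γ) / 2`, we have `θ(x, p) = (1 - γ)⁻¹ ∑ p(y) rʸ`. By the symmetry of `p`, the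
weight `rʸ` may be replaced by `(rʸ + rˣ⁻ʸ) / 2 = (r^(x/2 - d) + r^(x/2 + d)) / 2` with
`d = |y - x/2|`, and this weight is increasing in `d` since `r ≤ 1`. So `p₁` puts more mass than `p₂`
exactly where the weight is below its value at the threshold `z`, and less mass where it is above;
since both masses sum to `1`, the weighted sum is smaller for `p₁`.
-/

open Finset

def CentrallyDominates (x : ℕ) (p₁ p₂ : ℕ → ℝ) : Prop :=
  ∃ z : ℝ, 0 ≤ z ∧ z ≤ (x : ℝ) / 2 ∧
    ∀ y ≤ x, (|(y : ℝ) - (x : ℝ) / 2| ≤ z → p₂ y ≤ p₁ y) ∧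
             (z < |(y : ℝ) - (x : ℝ) / 2| → p₁ y ≤ p₂ y)

theorem sum_mul_le_sum_mul_of_sum_eq {ι : Type*} {s : Finset ι} {f g w : ι → ℝ} (G : ℝ)
    (hsum : ∑ i ∈ s, f i = ∑ i ∈ s, g i)
    (hsplit : ∀ i ∈ s, (g i ≤ f i ∧ w i ≤ G) ∨ (f i ≤ g i ∧ G ≤ w i)) :
    ∑ i ∈ s, f i * w i ≤ ∑ i ∈ s, g i * w i := by
  have hle : ∑ i ∈ s, (g i - f i) * G ≤ ∑ i ∈ s, (g i - f i) * w i := by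
    refine sum_le_sum fun i hi => ?_
    rcases hsplit i hi with ⟨hgf, hw⟩ | ⟨hfg, hw⟩
    · exact mul_le_mul_of_nonpos_left hw (sub_nonpos.2 hgf)
    · exact mul_le_mul_of_nonneg_left hw (sub_nonneg.2 hfg)
  rw [← sum_mul, sum_sub_distrib, hsum, sub_self, zero_mul] at hle
  simpa only [sub_mul, sum_sub_distrib, sub_nonneg] using hle

theorem rpow_sub_add_rpow_add_le {r : ℝ} (hr0 : 0 < r) (hr1 : r ≤ 1) (c : ℝ) {a b : ℝ}
    (ha : 0 ≤ a) (hab : a ≤ b) :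
    r ^ (c - a) + r ^ (c + a) ≤ r ^ (c - b) + r ^ (c + b) := by
  have h1 : r ^ (c + a) ≤ r ^ (c - b) :=
    Real.rpow_le_rpow_of_exponent_ge hr0 hr1 (by linarith)
  have h2 : r ^ (b - a) ≤ 1 := Real.rpow_le_one hr0.le hr1 (by linarith)
  have e1 : r ^ (c - b) * r ^ (b - a) = r ^ (c - a) := by
    rw [← Real.rpow_add hr0]; ring_nf
  have e2 : r ^ (c + a) * r ^ (b - a) = r ^ (c + b) := by
    rw [← Real.rpow_add hr0]; ring_nf
  nlinarith [mul_nonneg (sub_nonneg.2 h1) (sub_nonneg.2 h2)]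

theorem rpow_sub_abs_add_rpow_add_abs (r c t : ℝ) :
    r ^ (c - |t|) + r ^ (c + |t|) = r ^ (c - t) + r ^ (c + t) := by
  rcases abs_choice t with h | h <;> rw [h]
  rw [sub_neg_eq_add, ← sub_eq_add_neg, add_comm]

theorem pow_add_pow_sub_eq_rpow {r : ℝ} {x y : ℕ} (hy : y ≤ x) :
    r ^ y + r ^ (x - y) =
      r ^ ((x : ℝ) / 2 - |(y : ℝ) - x / 2|) + r ^ ((x : ℝ) / 2 + |(y : ℝ) - x / 2|) := by
  rw [rpow_sub_abs_add_rpow_add_abs, ← Real.rpow_natCast, ← Real.rpow_natCast, Nat.cast_sub hy,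
    add_comm]
  ring_nf

theorem sum_range_mul_reflect {x : ℕ} {p : ℕ → ℝ} (hp : ∀ y ≤ x, p (x - y) = p y) (φ : ℕ → ℝ) :
    ∑ y ∈ range (x + 1), p y * φ (x - y) = ∑ y ∈ range (x + 1), p y * φ y := by
  rw [← sum_range_reflect (fun y => p y * φ y)]
  refine sum_congr rfl fun y hy => ?_
  rw [Nat.add_sub_cancel, hp y (Nat.lt_succ_iff.mp (mem_range.mp hy))]

theorem sum_range_mul_pow_eq_half {x : ℕ} {p : ℕ → ℝ} (hp : ∀ y ≤ x, p (x - y) = p y) (r : ℝ) :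
    ∑ y ∈ range (x + 1), p y * r ^ y = (∑ y ∈ range (x + 1), p y * (r ^ y + r ^ (x - y))) / 2 := by
  simp only [mul_add, sum_add_distrib, sum_range_mul_reflect hp (r ^ ·)]
  ring

theorem sum_mul_pow_le_of_centrallyDominates {x : ℕ} {p₁ p₂ : ℕ → ℝ}
    (hsum : ∑ y ∈ range (x + 1), p₁ y = ∑ y ∈ range (x + 1), p₂ y)
    (h₁sym : ∀ y ≤ x, p₁ (x - y) = p₁ y) (h₂sym : ∀ y ≤ x, p₂ (x - y) = p₂ y)
    (hdom : CentrallyDominates x p₁ p₂) {r : ℝ} (hr0 : 0 < r) (hr1 : r ≤ 1) :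
    ∑ y ∈ range (x + 1), p₁ y * r ^ y ≤ ∑ y ∈ range (x + 1), p₂ y * r ^ y := by
  obtain ⟨z, hz0, -, hdy⟩ := hdom
  rw [sum_range_mul_pow_eq_half h₁sym, sum_range_mul_pow_eq_half h₂sym]
  refine div_le_div_of_nonneg_right
    (sum_mul_le_sum_mul_of_sum_eq (r ^ ((x : ℝ) / 2 - z) + r ^ ((x : ℝ) / 2 + z)) hsum
      fun y hy => ?_) zero_le_two
  have hyx : y ≤ x := Nat.lt_succ_iff.mp (mem_range.mp hy)
  rw [pow_add_pow_sub_eq_rpow hyx]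
  rcases le_or_gt |(y : ℝ) - x / 2| z with h | h
  · exact .inl ⟨(hdy y hyx).1 h, rpow_sub_add_rpow_add_le hr0 hr1 _ (abs_nonneg _) h⟩
  · exact .inr ⟨(hdy y hyx).2 h, rpow_sub_add_rpow_add_le hr0 hr1 _ hz0 h.le⟩

theorem stmt_3 (γ : ℝ) (hγ0 : 0 < γ) (hγ1 : γ < 1) (x : ℕ)
    (p₁ p₂ : ℕ → ℝ)
    (h₁sum : ∑ y ∈ Finset.range (x + 1), p₁ y = 1)
    (h₂sum : ∑ y ∈ Finset.range (x + 1), p₂ y = 1)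
    (h₁sym : ∀ y ≤ x, p₁ (x - y) = p₁ y)
    (h₂sym : ∀ y ≤ x, p₂ (x - y) = p₂ y)
    (hdom : ∃ z : ℝ, 0 ≤ z ∧ z ≤ (x : ℝ) / 2 ∧
      ∀ y ≤ x, (|(y : ℝ) - (x : ℝ) / 2| ≤ z → p₂ y ≤ p₁ y) ∧
               (z < |(y : ℝ) - (x : ℝ) / 2| → p₁ y ≤ p₂ y)) :
    ∑ y ∈ Finset.range (x + 1), p₁ y * (1 / 2 : ℝ) ^ y * (1 - γ) ^ ((y : ℤ) - 1) ≤
    ∑ y ∈ Finset.range (x + 1), p₂ y * (1 / 2 : ℝ) ^ y * (1 - γ) ^ ((y : ℤ) - 1) := by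
  have hγ : (1 - γ : ℝ) ≠ 0 := by linarith
  have hterm : ∀ (p : ℕ → ℝ) (y : ℕ), p y * (1 / 2 : ℝ) ^ y * (1 - γ) ^ ((y : ℤ) - 1)
      = p y * ((1 - γ) / 2) ^ y * (1 - γ)⁻¹ := fun p y => by
    rw [zpow_sub₀ hγ, zpow_natCast, zpow_one, div_eq_mul_inv (1 - γ), mul_pow, one_div]
    ring
  simp only [hterm, ← sum_mul]
  refine mul_le_mul_of_nonneg_right ?_ (inv_nonneg.2 (by linarith))
  exact sum_mul_pow_le_of_centrallyDominates (h₁sum.trans h₂sum.symm) h₁sym h₂sym hdom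
    (by linarith) (by linarith)
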